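/- arXiv:2504.13613 — 2 statements merged into one kernel-verified Lean document; each statement's English description precedes it below -/
import Mathlib

section
/- Let $P$ be a joint distribution of $N$ binary random variables and let $G$ be a directed acyclic graph on the variables in which each node has at most one parent (a directed tree/forest with edge set $\mathcal{T}$). Let $Q$ be the distribution defined by $Q(x_1,\dots,x_N) = \prod_i P(x_i \mid x_{pa(i)})$. Then the Kullback–Leibler divergence satisfies $D(P \| Q) = -\sum_{(i,j)\in\mathcal{T}} I(X_i; X_j) + \sum_{i=1}^N H(X_i) - H(X_1,\dots,X_N)$, where $I$ is mutual information and $H$ is Shannon entropy. -/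
/-!
Every term of the identity is an expectation under `P` of a function of one or two coordinates.
Since `Q` is a product of conditionals, `log Q` splits into a sum of logarithms of factors, and
for an edge `j → i` the pointwise identity
`log (P(x_j, x_i) / P(x_j)) = log (P(x_j, x_i) / (P(x_j) P(x_i))) + log P(x_i)`
turns the expected log-factor into `I(X_j; X_i) - H(X_i)`; for a root it is `-H(X_i)`.
Every marginal evaluated at a point of positive mass is positive, so all logarithms split.
-/

open Finset Real

noncomputable section Marginal

variable {Ω β γ : Type*} [Fintype Ω] [DecidableEq β] [DecidableEq γ] (P : Ω → ℝ)

def marginal (X : Ω → β) (b : β) : ℝ :=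
  ∑ ω ∈ univ.filter (fun ω => X ω = b), P ω

def marginal₂ (X : Ω → β) (Y : Ω → γ) (b : β) (c : γ) : ℝ :=
  ∑ ω ∈ univ.filter (fun ω => X ω = b ∧ Y ω = c), P ω

variable {P} in
theorem marginal_apply_pos (hP : ∀ ω, 0 < P ω) (X : Ω → β) (ω : Ω) :
    0 < marginal P X (X ω) :=
  sum_pos (fun ω _ => hP ω) ⟨ω, by simp⟩

variable {P} in
theorem marginal₂_apply_pos (hP : ∀ ω, 0 < P ω) (X : Ω → β) (Y : Ω → γ) (ω : Ω) :
    0 < marginal₂ P X Y (X ω) (Y ω) :=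
  sum_pos (fun ω _ => hP ω) ⟨ω, by simp⟩

variable [Fintype β] [Fintype γ]

def entropy (X : Ω → β) : ℝ :=
  -∑ b, marginal P X b * log (marginal P X b)

def mutualInfo (X : Ω → β) (Y : Ω → γ) : ℝ :=
  ∑ b, ∑ c, marginal₂ P X Y b c * log (marginal₂ P X Y b c / (marginal P X b * marginal P Y c))

theorem sum_mul_comp_eq_sum_marginal_mul (X : Ω → β) (f : β → ℝ) :
    ∑ ω, P ω * f (X ω) = ∑ b, marginal P X b * f b := by
  rw [← sum_fiberwise univ X]
  refine sum_congr rfl fun b _ => ?_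
  rw [marginal, sum_mul]
  exact sum_congr rfl fun ω hω => by rw [(mem_filter.mp hω).2]

theorem sum_mul_comp₂_eq_sum_marginal₂_mul (X : Ω → β) (Y : Ω → γ) (f : β → γ → ℝ) :
    ∑ ω, P ω * f (X ω) (Y ω) = ∑ b, ∑ c, marginal₂ P X Y b c * f b c := by
  rw [sum_mul_comp_eq_sum_marginal_mul P (fun ω => (X ω, Y ω)) (fun p => f p.1 p.2),
    Fintype.sum_prod_type]
  simp only [marginal, marginal₂, Prod.mk.injEq]

theorem sum_mul_log_marginal (X : Ω → β) :
    ∑ ω, P ω * log (marginal P X (X ω)) = -entropy P X := by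
  rw [entropy, neg_neg, sum_mul_comp_eq_sum_marginal_mul P X (fun b => log (marginal P X b))]

theorem sum_mul_log_conditional (hP : ∀ ω, 0 < P ω) (X : Ω → β) (Y : Ω → γ) :
    ∑ ω, P ω * log (marginal₂ P X Y (X ω) (Y ω) / marginal P X (X ω)) =
      mutualInfo P X Y - entropy P Y := by
  have hsplit : ∀ ω, log (marginal₂ P X Y (X ω) (Y ω) / marginal P X (X ω)) =
      log (marginal₂ P X Y (X ω) (Y ω) / (marginal P X (X ω) * marginal P Y (Y ω))) +
        log (marginal P Y (Y ω)) := fun ω => by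
    rw [← div_div, log_div (div_pos (marginal₂_apply_pos hP X Y ω)
      (marginal_apply_pos hP X ω)).ne' (marginal_apply_pos hP Y ω).ne', sub_add_cancel]
  simp_rw [hsplit, mul_add, sum_add_distrib, sum_mul_log_marginal, mutualInfo,
    sum_mul_comp₂_eq_sum_marginal₂_mul P X Y
      (fun b c => log (marginal₂ P X Y b c / (marginal P X b * marginal P Y c)))]
  ring

end Marginal

theorem sum_mul_log_div {Ω : Type*} [Fintype Ω] {P Q : Ω → ℝ} (hP : ∀ ω, 0 < P ω)
    (hQ : ∀ ω, 0 < Q ω) :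
    ∑ ω, P ω * log (P ω / Q ω) = ∑ ω, P ω * log (P ω) - ∑ ω, P ω * log (Q ω) := by
  simp_rw [← sum_sub_distrib, ← mul_sub, log_div (hP _).ne' (hQ _).ne']

theorem sum_mul_log_prod {Ω ι : Type*} [Fintype Ω] [Fintype ι] (P : Ω → ℝ) {F : ι → Ω → ℝ}
    (hF : ∀ i ω, F i ω ≠ 0) :
    ∑ ω, P ω * log (∏ i, F i ω) = ∑ i, ∑ ω, P ω * log (F i ω) := by
  simp_rw [log_prod fun i _ => hF i _, mul_sum]
  exact sum_comm

theorem stmt_7_general (N : ℕ) (P : (Fin N → Bool) → ℝ)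
    (hpos : ∀ q, 0 < P q)
    (pa : Fin N → Option (Fin N))
    -- single-variable marginals
    (M1 : Fin N → Bool → ℝ)
    (hM1 : ∀ i b, M1 i b = ∑ q ∈ Finset.univ.filter (fun q : Fin N → Bool => q i = b), P q)
    -- pairwise marginals
    (M2 : Fin N → Fin N → Bool → Bool → ℝ)
    (hM2 : ∀ i j b c, M2 i j b c =
      ∑ q ∈ Finset.univ.filter (fun q : Fin N → Bool => q i = b ∧ q j = c), P q)
    -- the tree-structured Bayesian network distribution
    (Q : (Fin N → Bool) → ℝ)
    (hQ : ∀ x, Q x = ∏ i : Fin N,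
      (pa i).elim (M1 i (x i)) (fun j => M2 j i (x j) (x i) / M1 j (x j)))
    -- marginal entropies
    (H1 : Fin N → ℝ)
    (hH1 : ∀ i, H1 i = -∑ b : Bool, M1 i b * Real.log (M1 i b))
    -- joint entropy
    (Hjoint : ℝ) (hHjoint : Hjoint = -∑ q : Fin N → Bool, P q * Real.log (P q))
    -- pairwise mutual information
    (I : Fin N → Fin N → ℝ)
    (hI : ∀ j i, I j i = ∑ b : Bool, ∑ c : Bool,
      M2 j i b c * Real.log (M2 j i b c / (M1 j b * M1 i c)))
    -- Kullback–Leibler divergence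
    (D : ℝ) (hD : D = ∑ q : Fin N → Bool, P q * Real.log (P q / Q q)) :
    D = -(∑ i : Fin N, (pa i).elim 0 (fun j => I j i)) + (∑ i : Fin N, H1 i) - Hjoint := by
  obtain rfl : M1 = fun i => marginal P (· i) := funext₂ hM1
  obtain rfl : M2 = fun j i => marginal₂ P (· j) (· i) := funext₂ fun j i => funext₂ (hM2 j i)
  obtain rfl : H1 = fun i => entropy P (· i) := funext hH1
  obtain rfl : I = fun j i => mutualInfo P (· j) (· i) := funext₂ hI
  obtain rfl : Q = _ := funext hQ
  subst hD hHjoint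
  beta_reduce
  have hfactor_pos : ∀ i (q : Fin N → Bool), 0 < (pa i).elim (marginal P (· i) (q i))
      (fun j => marginal₂ P (· j) (· i) (q j) (q i) / marginal P (· j) (q j)) := fun i q => by
    cases pa i with
    | none => exact marginal_apply_pos hpos _ q
    | some j => exact div_pos (marginal₂_apply_pos hpos _ _ q) (marginal_apply_pos hpos _ q)
  have hfactor : ∀ i, ∑ q : Fin N → Bool, P q * log ((pa i).elim (marginal P (· i) (q i))
      (fun j => marginal₂ P (· j) (· i) (q j) (q i) / marginal P (· j) (q j))) =
        (pa i).elim 0 (fun j => mutualInfo P (· j) (· i)) - entropy P (· i) := fun i => by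
    cases pa i with
    | none => simpa using sum_mul_log_marginal P (· i)
    | some j => exact sum_mul_log_conditional P hpos (· j) (· i)
  rw [sum_mul_log_div hpos fun q => prod_pos fun i _ => hfactor_pos i q,
    sum_mul_log_prod P fun i q => (hfactor_pos i q).ne']
  simp only [hfactor, sum_sub_distrib]
  ring

/-- Chow–Liu decomposition: for a joint distribution `P` over `N` binary variables and a
directed forest structure given by `pa` (each node has at most one parent, with smaller
index), let `Q` be the tree-structured Bayesian network distribution built from the true
conditionals of `P`. Then
`D(P‖Q) = -∑_{(j,i) ∈ 𝒯} I(X_j; X_i) + ∑_i H(X_i) - H(X_1,…,X_N)`. -/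
theorem stmt_7 (N : ℕ) (P : (Fin N → Bool) → ℝ)
    (hpos : ∀ q, 0 < P q) (hsum : ∑ q : Fin N → Bool, P q = 1)
    (pa : Fin N → Option (Fin N)) (hacyc : ∀ i j, pa i = some j → j < i)
    -- single-variable marginals
    (M1 : Fin N → Bool → ℝ)
    (hM1 : ∀ i b, M1 i b = ∑ q ∈ Finset.univ.filter (fun q : Fin N → Bool => q i = b), P q)
    -- pairwise marginals
    (M2 : Fin N → Fin N → Bool → Bool → ℝ)
    (hM2 : ∀ i j b c, M2 i j b c =
      ∑ q ∈ Finset.univ.filter (fun q : Fin N → Bool => q i = b ∧ q j = c), P q)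
    -- the tree-structured Bayesian network distribution
    (Q : (Fin N → Bool) → ℝ)
    (hQ : ∀ x, Q x = ∏ i : Fin N,
      (pa i).elim (M1 i (x i)) (fun j => M2 j i (x j) (x i) / M1 j (x j)))
    -- marginal entropies
    (H1 : Fin N → ℝ)
    (hH1 : ∀ i, H1 i = -∑ b : Bool, M1 i b * Real.log (M1 i b))
    -- joint entropy
    (Hjoint : ℝ) (hHjoint : Hjoint = -∑ q : Fin N → Bool, P q * Real.log (P q))
    -- pairwise mutual information
    (I : Fin N → Fin N → ℝ)
    (hI : ∀ j i, I j i = ∑ b : Bool, ∑ c : Bool,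
      M2 j i b c * Real.log (M2 j i b c / (M1 j b * M1 i c)))
    -- Kullback–Leibler divergence
    (D : ℝ) (hD : D = ∑ q : Fin N → Bool, P q * Real.log (P q / Q q)) :
    D = -(∑ i : Fin N, (pa i).elim 0 (fun j => I j i)) + (∑ i : Fin N, H1 i) - Hjoint :=
  stmt_7_general N P hpos pa M1 hM1 M2 hM2 Q hQ H1 hH1 Hjoint hHjoint I hI D hD
end

section
/- Let $\tilde\theta, \theta \in [0, \pi/2]$ with $|\tilde\theta - \theta| \le \varepsilon$. Then $|\sin^2\tilde\theta - \sin^2\theta| \le 2\varepsilon\sqrt{\sin^2\theta(1-\sin^2\theta)} + \varepsilon^2$. -/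
/-! Writing `δ = θ' - θ`, one has `sin² θ' - sin² θ = sin (2θ + δ) sin δ`, and
`|sin (2θ + δ)| ≤ |sin 2θ| + |δ|`, `|sin δ| ≤ |δ|`; finally `|sin 2θ| = 2 √(sin² θ (1 - sin² θ))`. -/

namespace Real

theorem sin_sq_sub_sin_sq (x y : ℝ) : sin x ^ 2 - sin y ^ 2 = sin (x + y) * sin (x - y) := by
  rw [sin_add, sin_sub]
  linear_combination sin y ^ 2 * sin_sq_add_cos_sq x - sin x ^ 2 * sin_sq_add_cos_sq y

theorem abs_sin_sq_sub_sin_sq_le (x y : ℝ) :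
    |sin x ^ 2 - sin y ^ 2| ≤ |sin (2 * y)| * |x - y| + (x - y) ^ 2 := by
  set δ := x - y
  have hsum : |sin (x + y)| ≤ |sin (2 * y)| + |δ| := by
    rw [show x + y = 2 * y + δ by ring, sin_add]
    calc |sin (2 * y) * cos δ + cos (2 * y) * sin δ|
        ≤ |sin (2 * y)| * |cos δ| + |cos (2 * y)| * |sin δ| := by
          simpa only [abs_mul] using abs_add_le (sin (2 * y) * cos δ) (cos (2 * y) * sin δ)
      _ ≤ |sin (2 * y)| * 1 + 1 * |δ| :=
          add_le_add (mul_le_mul_of_nonneg_left (abs_cos_le_one δ) (abs_nonneg _))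
            (mul_le_mul (abs_cos_le_one _) abs_sin_le_abs (abs_nonneg _) zero_le_one)
      _ = |sin (2 * y)| + |δ| := by ring
  rw [sin_sq_sub_sin_sq, abs_mul, ← sq_abs δ, sq, ← add_mul]
  exact mul_le_mul hsum abs_sin_le_abs (abs_nonneg _) (by positivity)

theorem sqrt_sin_sq_mul_one_sub_sin_sq (y : ℝ) :
    √(sin y ^ 2 * (1 - sin y ^ 2)) = |sin (2 * y)| / 2 := by
  rw [← cos_sq', ← mul_pow, sqrt_sq_eq_abs, sin_two_mul]
  simp only [abs_mul, abs_two]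
  ring

end Real

theorem stmt_13_general (θ' θ ε : ℝ) (h : |θ' - θ| ≤ ε) :
    |Real.sin θ' ^ 2 - Real.sin θ ^ 2|
      ≤ 2 * ε * Real.sqrt (Real.sin θ ^ 2 * (1 - Real.sin θ ^ 2)) + ε ^ 2 := by
  rw [Real.sqrt_sin_sq_mul_one_sub_sin_sq]
  calc |Real.sin θ' ^ 2 - Real.sin θ ^ 2|
      ≤ |Real.sin (2 * θ)| * |θ' - θ| + |θ' - θ| ^ 2 := by
        simpa only [sq_abs] using Real.abs_sin_sq_sub_sin_sq_le θ' θ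
    _ ≤ |Real.sin (2 * θ)| * ε + ε ^ 2 := by gcongr
    _ = 2 * ε * (|Real.sin (2 * θ)| / 2) + ε ^ 2 := by ring

theorem stmt_13 (θ' θ ε : ℝ) (hθ'0 : 0 ≤ θ') (hθ'1 : θ' ≤ Real.pi / 2)
    (hθ0 : 0 ≤ θ) (hθ1 : θ ≤ Real.pi / 2) (h : |θ' - θ| ≤ ε) :
    |Real.sin θ' ^ 2 - Real.sin θ ^ 2|
      ≤ 2 * ε * Real.sqrt (Real.sin θ ^ 2 * (1 - Real.sin θ ^ 2)) + ε ^ 2 :=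
  stmt_13_general θ' θ ε h
end
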